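/- For all real numbers r > 0 and c > 1, the series ∑_{z=1}^∞ (r)_z / (r+c)_z converges and equals r/(c−1). Consequently, the mean of the digamma distribution with parameters r and c is ∑_{z=1}^∞ z · digamma(z; r, c) = r / ((c−1)(ψ(r+c) − ψ(c))). -/

import Mathlib

open scoped BigOperators

/-- Rising factorial `(a)_z = a(a+1)⋯(a+z-1)`. -/
noncomputable def risingFac (a : ℝ) (z : ℕ) : ℝ := ∏ i ∈ Finset.range z, (a + i)

/-- Digamma function `ψ(x) = Γ'(x)/Γ(x)`. -/
noncomputable def psi (x : ℝ) : ℝ := deriv Real.Gamma x / Real.Gamma x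

/-- Probability mass function of the digamma distribution (for `z ≥ 1`). -/
noncomputable def digammaPMF (r θ : ℝ) (z : ℕ) : ℝ :=
  (psi (r + θ) - psi θ)⁻¹ * (risingFac r z / (risingFac (r + θ) z * z))

/-! The tail `v N = (r)_{N+1} / (r+c)_N` telescopes the series: `v N - v (N+1) = (c-1) (r)_{N+1} / (r+c)_{N+1}`,
and `v` shrinks by the factor `1 - (c-1)/(r+c+N)` at each step. Since the harmonic-type series
`∑ (c-1)/(r+c+N)` diverges, `v N → 0`, so the series sums to `v 0 / (c-1) = r / (c-1)`.
Since `z · digamma(z; r, c)` is the `z`-th term divided by `ψ(r+c) - ψ(c)`, the mean follows. -/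

open Filter Topology

theorem tendsto_zero_of_mul_le_sub_succ {u x : ℕ → ℝ} (hu : ∀ n, 0 ≤ u n) (hx : ∀ n, 0 ≤ x n)
    (hx_sum : ¬ Summable x) (h : ∀ n, x n * u n ≤ u n - u (n + 1)) :
    Tendsto u atTop (𝓝 0) := by
  have anti : Antitone u :=
    antitone_nat_of_succ_le fun n => by linarith [h n, mul_nonneg (hx n) (hu n)]
  have hlim := tendsto_atTop_ciInf anti ⟨0, by rintro _ ⟨n, rfl⟩; exact hu n⟩
  set L := ⨅ n, u n
  have hL : 0 ≤ L := ge_of_tendsto' hlim hu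
  suffices L = 0 from this ▸ hlim
  by_contra hL0
  have hLpos : 0 < L := lt_of_le_of_ne hL (Ne.symm hL0)
  refine hx_sum (summable_of_sum_range_le hx (c := u 0 / L) fun N => ?_)
  rw [le_div_iff₀ hLpos]
  calc (∑ k ∈ Finset.range N, x k) * L
      = ∑ k ∈ Finset.range N, x k * L := Finset.sum_mul _ _ _
    _ ≤ ∑ k ∈ Finset.range N, (u k - u (k + 1)) :=
        Finset.sum_le_sum fun k _ =>
          (mul_le_mul_of_nonneg_left (anti.le_of_tendsto hlim k) (hx k)).trans (h k)
    _ = u 0 - u N := Finset.sum_range_sub' u N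
    _ ≤ u 0 := sub_le_self _ (hu N)

theorem not_summable_const_div_natCast_add {a : ℝ} (ha : 0 < a) {b : ℝ} (hb : b ≠ 0) :
    ¬ Summable fun n : ℕ => b / (a + n) := by
  have harm : ¬ Summable fun n : ℕ => 1 / |(n : ℝ) + a| ^ (1 : ℝ) :=
    (Real.summable_one_div_nat_add_rpow a 1).not.2 (lt_irrefl 1)
  intro hs
  refine harm ((summable_mul_left_iff hb).1 (hs.congr fun n => ?_))
  have : 0 < (n : ℝ) + a := by positivity
  rw [Real.rpow_one, abs_of_pos this, add_comm]
  field_simp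

theorem risingFac_pos {a : ℝ} (ha : 0 < a) (n : ℕ) : 0 < risingFac a n :=
  Finset.prod_pos fun i _ => by positivity

theorem risingFac_succ (a : ℝ) (n : ℕ) : risingFac a (n + 1) = risingFac a n * (a + n) :=
  Finset.prod_range_succ _ _

section Tail

variable {r c : ℝ}

theorem risingFac_div_risingFac_sub_succ (hrc : 0 < r + c) (N : ℕ) :
    risingFac r (N + 1) / risingFac (r + c) N - risingFac r (N + 1 + 1) / risingFac (r + c) (N + 1)
      = (c - 1) * (risingFac r (N + 1) / risingFac (r + c) (N + 1)) := by
  have := (risingFac_pos hrc N).ne'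
  have : r + c + N ≠ 0 := by positivity
  rw [risingFac_succ r (N + 1), risingFac_succ (r + c) N]
  push_cast
  field_simp
  ring

theorem risingFac_div_risingFac_eq_mul (hrc : 0 < r + c) (N : ℕ) :
    risingFac r (N + 1) / risingFac (r + c) N
      = (r + c + N) * (risingFac r (N + 1) / risingFac (r + c) (N + 1)) := by
  have := (risingFac_pos hrc N).ne'
  have : r + c + N ≠ 0 := by positivity
  rw [risingFac_succ (r + c) N]
  field_simp

theorem hasSum_risingFac_div_risingFac (hr : 0 < r) (hc : 1 < c) :
    HasSum (fun z : ℕ => risingFac r (z + 1) / risingFac (r + c) (z + 1)) (r / (c - 1)) := by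
  have hrc : 0 < r + c := by linarith
  set v : ℕ → ℝ := fun N => risingFac r (N + 1) / risingFac (r + c) N
  have hv : ∀ N, 0 ≤ v N := fun N => (div_pos (risingFac_pos hr _) (risingFac_pos hrc _)).le
  have hx : ∀ N : ℕ, 0 ≤ (c - 1) / (r + c + N) := fun N => div_nonneg (by linarith) (by positivity)
  have hdiff : ∀ N, v N - v (N + 1) = (c - 1) / (r + c + N) * v N := fun N => by
    have : r + c + N ≠ 0 := by positivity
    simp only [v]
    rw [risingFac_div_risingFac_sub_succ hrc, risingFac_div_risingFac_eq_mul hrc N]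
    field_simp
  have hv_lim : Tendsto v atTop (𝓝 0) :=
    tendsto_zero_of_mul_le_sub_succ hv hx
      (not_summable_const_div_natCast_add hrc (by linarith)) fun N => (hdiff N).ge
  have htel : HasSum (fun N => v N - v (N + 1)) r := by
    rw [hasSum_iff_tendsto_nat_of_nonneg fun N => by
      rw [hdiff]; exact mul_nonneg (hx N) (hv N)]
    simp_rw [Finset.sum_range_sub']
    simpa [v, risingFac] using (tendsto_const_nhds (x := v 0)).sub hv_lim
  have hterm : (fun z : ℕ => risingFac r (z + 1) / risingFac (r + c) (z + 1))
      = fun N => (v N - v (N + 1)) / (c - 1) := funext fun N => by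
    simp only [v]
    rw [risingFac_div_risingFac_sub_succ hrc]
    field_simp [(by linarith : c - 1 ≠ 0)]
  rw [hterm]
  exact htel.div_const (c - 1)

end Tail

theorem natCast_mul_digammaPMF (r θ : ℝ) {z : ℕ} (hz : z ≠ 0) :
    z * digammaPMF r θ z = (psi (r + θ) - psi θ)⁻¹ * (risingFac r z / risingFac (r + θ) z) := by
  rw [digammaPMF, div_mul_eq_div_div, mul_left_comm, mul_div_cancel₀ _ (Nat.cast_ne_zero.2 hz)]

theorem stmt_8 (r c : ℝ) (hr : 0 < r) (hc : 1 < c) :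
    HasSum (fun z : ℕ => risingFac r (z + 1) / risingFac (r + c) (z + 1)) (r / (c - 1)) ∧
    HasSum (fun z : ℕ => ((z : ℝ) + 1) * digammaPMF r c (z + 1))
      (r / ((c - 1) * (psi (r + c) - psi c))) := by
  have hsum := hasSum_risingFac_div_risingFac hr hc
  refine ⟨hsum, ?_⟩
  have hterm : (fun z : ℕ => ((z : ℝ) + 1) * digammaPMF r c (z + 1)) = fun z =>
      (psi (r + c) - psi c)⁻¹ * (risingFac r (z + 1) / risingFac (r + c) (z + 1)) :=
    funext fun z => mod_cast natCast_mul_digammaPMF r c z.succ_ne_zero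
  rw [hterm, ← div_div, div_eq_inv_mul]
  exact hsum.mul_left _
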